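/- Let (W,S) be a Coxeter system, and for each s ∈ S let d_s = [W : W_{S∖{s}}] be the index of the parabolic subgroup generated by S∖{s}. If -1/(d_s − 1) ≤ q_s ≤ 1 for all s ∈ S (with convention -1/(d_s−1) = 0 if d_s = ∞), then the Riesz–Coxeter function R_q(w) = ∏_{s ∈ S_w} q_s is positive definite on W. -/

import Mathlib

/-!
Positive definiteness of `φ` on a group is positive semidefiniteness of the kernel matrix
`(y, x) ↦ φ (y⁻¹ * x)`, so by the Schur product theorem positive definite functions are closed
under products. For a single generator `s`, the function equal to `1` on `W_{S∖{s}}` and to `q_s`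
off it is the pull-back along `W → W ⧸ W_{S∖{s}}` of the equicorrelation matrix with off-diagonal
entry `q_s`; over `d_s` points its eigenvalues are `1 - q_s` and `1 + (d_s - 1) q_s`, both
nonnegative under the hypothesis. On any finite set of group elements, `R_q` agrees with the
product of these functions over the finitely many generators occurring in their colours.
-/

open scoped ComplexOrder

/-- A function `φ : Γ → ℂ` is positive definite if for every finitely supported `α`,
`∑_{x,y} φ(y⁻¹ x) α(x) conj(α(y))` is a nonnegative (real) number. -/
def IsPosDef {Γ : Type*} [Group Γ] (φ : Γ → ℂ) : Prop :=
  ∀ (s : Finset Γ) (α : Γ → ℂ),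
    0 ≤ ∑ x ∈ s, ∑ y ∈ s, φ (y⁻¹ * x) * α x * (starRingEnd ℂ) (α y)

variable {B W : Type*} [Group W] {M : CoxeterMatrix B}

/-- The (standard) parabolic subgroup of a Coxeter system generated by
the simple reflections indexed by `T`. -/
def parabolic (cs : CoxeterSystem M W) (T : Set B) : Subgroup W :=
  Subgroup.closure (cs.simple '' T)

/-- The colour `S_w` of `w`: the set of simple reflections occurring in any reduced word
for `w`; equivalently, `s ∈ S_w` iff `w ∉ W_{S∖{s}}`. -/
def colour (cs : CoxeterSystem M W) (w : W) : Set B :=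
  {i | w ∉ parabolic cs {j | j ≠ i}}

namespace Matrix

variable {n R : Type*} [Ring R] [PartialOrder R] [StarRing R] [StarOrderedRing R]

theorem posSemidef_allOnes : (of fun _ _ => (1 : R) : Matrix n n R).PosSemidef := by
  refine ⟨by ext; simp, fun x => ?_⟩
  simpa [Finsupp.sum, Finset.sum_mul_sum, star_sum] using
    star_mul_self_nonneg (x.sum fun _ xi => xi)

theorem posSemidef_of_isStarProjection [Fintype n] {P : Matrix n n R}
    (hP : IsStarProjection P) : P.PosSemidef := by
  have hP' : P = Pᴴ * P := by
    rw [← star_eq_conjTranspose, hP.isSelfAdjoint.star_eq, hP.isIdempotentElem.eq]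
  exact hP' ▸ posSemidef_conjTranspose_mul_self P

theorem isStarProjection_inv_card_smul_allOnes [Fintype n] [Nonempty n] :
    IsStarProjection ((Fintype.card n : ℝ)⁻¹ • (of fun _ _ => (1 : ℂ) : Matrix n n ℂ)) := by
  refine ⟨?_, ?_⟩ <;> ext i j <;> simp [mul_apply]

def equicorrelation (n : Type*) [DecidableEq n] (q : ℝ) : Matrix n n ℂ :=
  of fun i j => if i = j then 1 else (q : ℂ)

/-- The lower bound on `q` is `-1 / (d - 1)` for `d = Nat.card n`, read as `0` when `n` is
infinite (where `Nat.card n = 0`). -/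
theorem posSemidef_equicorrelation [DecidableEq n] {q : ℝ}
    (hq : (if Nat.card n = 0 then (0 : ℝ) else -1 / ((Nat.card n : ℝ) - 1)) ≤ q) (hq1 : q ≤ 1) :
    (equicorrelation n q).PosSemidef := by
  split_ifs at hq with hn
  · have hdecomp : equicorrelation n q = (1 - q) • (1 : Matrix n n ℂ) + q • of fun _ _ => 1 := by
      ext i j
      by_cases h : i = j <;> simp [equicorrelation, h]
    rw [hdecomp]
    exact (PosSemidef.one.smul (by linarith)).add (posSemidef_allOnes.smul hq)
  · have := Nat.finite_of_card_ne_zero hn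
    have := Fintype.ofFinite n
    have : Nonempty n := (Nat.card_pos_iff.mp (Nat.pos_of_ne_zero hn)).1
    rw [Nat.card_eq_fintype_card] at hq hn
    have hd : (1 : ℝ) ≤ Fintype.card n := by exact_mod_cast Nat.one_le_iff_ne_zero.mpr hn
    set d : ℝ := (Fintype.card n : ℝ)
    have hqd : 0 ≤ 1 + (d - 1) * q := by
      rcases hd.lt_or_eq with hd | hd
      · rw [div_le_iff₀ (by linarith)] at hq
        linarith
      · simp [← hd]
    have hP := isStarProjection_inv_card_smul_allOnes (n := n)
    have hdecomp : equicorrelation n q = (1 - q) • (1 - d⁻¹ • of fun _ _ => (1 : ℂ)) +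
        (1 + (d - 1) * q) • d⁻¹ • of fun _ _ => (1 : ℂ) := by
      ext i j
      simp only [equicorrelation, of_apply, add_apply, sub_apply, smul_apply, one_apply,
        Complex.real_smul]
      split_ifs <;> push_cast <;> field_simp <;> ring
    rw [hdecomp]
    exact ((posSemidef_of_isStarProjection hP.one_sub).smul (by linarith)).add
      ((posSemidef_of_isStarProjection hP).smul hqd)

end Matrix

section PositiveDefinite

variable {Γ : Type*} [Group Γ]

def kernelMatrix (φ : Γ → ℂ) : Matrix Γ Γ ℂ := Matrix.of fun y x => φ (y⁻¹ * x)

theorem IsPosDef.apply_one_nonneg {φ : Γ → ℂ} (h : IsPosDef φ) : 0 ≤ φ 1 := by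
  simpa using h {1} 1

theorem IsPosDef.apply_inv {φ : Γ → ℂ} (h : IsPosDef φ) (w : Γ) :
    φ w⁻¹ = starRingEnd ℂ (φ w) := by
  classical
  have h1 := (Complex.nonneg_iff.mp h.apply_one_nonneg).2
  rcases eq_or_ne w 1 with rfl | hw
  · exact Complex.ext (by simp) (by simp [← h1])
  -- polarization: test against `α = 1` at `1` and `α = c` at `w`, for `c = 1` and `c = I`
  have hform (c : ℂ) :
      0 ≤ φ 1 * (1 + c * starRingEnd ℂ c) + (φ w⁻¹ * starRingEnd ℂ c + φ w * c) := by
    convert h {w, 1} (fun g => if g = w then c else 1) using 1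
    simp only [mul_ite, mul_one, ite_mul, Finset.sum_pair hw, if_pos, if_neg hw.symm, inv_one,
      one_mul, map_one, inv_mul_cancel]
    ring
  have hre : 0 = (φ w⁻¹).im + (φ w).im := by
    simpa [← h1] using (Complex.nonneg_iff.mp (hform 1)).2
  have him : 0 = -(φ w⁻¹).re + (φ w).re := by
    simpa [← h1] using (Complex.nonneg_iff.mp (hform Complex.I)).2
  exact Complex.ext (by rw [Complex.conj_re]; linarith) (by rw [Complex.conj_im]; linarith)

theorem isPosDef_iff_posSemidef_kernelMatrix {φ : Γ → ℂ} :
    IsPosDef φ ↔ (kernelMatrix φ).PosSemidef := by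
  refine ⟨fun h => ⟨?_, fun x => ?_⟩, fun h s α => ?_⟩
  · ext y x
    simp [kernelMatrix, ← h.apply_inv]
  · convert h x.support x using 1
    simp only [Finsupp.sum]
    rw [Finset.sum_comm]
    refine Finset.sum_congr rfl fun a _ => Finset.sum_congr rfl fun b _ => ?_
    simp only [RCLike.star_def, kernelMatrix, Matrix.of_apply]
    ring
  · convert (h.submatrix ((↑) : s → Γ)).dotProduct_mulVec_nonneg (fun x => α x) using 1
    simp only [dotProduct, Matrix.mulVec, Finset.mul_sum]
    rw [Finset.sum_comm, ← Finset.sum_coe_sort s]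
    refine Finset.sum_congr rfl fun a _ => ?_
    rw [← Finset.sum_coe_sort s]
    refine Finset.sum_congr rfl fun b _ => ?_
    simp only [Pi.star_apply, RCLike.star_def, kernelMatrix, Matrix.submatrix_apply, Matrix.of_apply]
    ring

theorem IsPosDef.mul {φ ψ : Γ → ℂ} (hφ : IsPosDef φ) (hψ : IsPosDef ψ) :
    IsPosDef (φ * ψ) :=
  isPosDef_iff_posSemidef_kernelMatrix.mpr <|
    (isPosDef_iff_posSemidef_kernelMatrix.mp hφ).hadamard
      (isPosDef_iff_posSemidef_kernelMatrix.mp hψ)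

theorem isPosDef_one : IsPosDef (1 : Γ → ℂ) :=
  isPosDef_iff_posSemidef_kernelMatrix.mpr Matrix.posSemidef_allOnes

theorem isPosDef_finset_prod {ι : Type*} (t : Finset ι) {φ : ι → Γ → ℂ}
    (h : ∀ i ∈ t, IsPosDef (φ i)) : IsPosDef (∏ i ∈ t, φ i) :=
  Finset.prod_induction _ _ (fun _ _ => IsPosDef.mul) isPosDef_one h

theorem isPosDef_of_forall_finset_eqOn {φ : Γ → ℂ}
    (h : ∀ T : Finset Γ, ∃ ψ, IsPosDef ψ ∧ Set.EqOn φ ψ T) : IsPosDef φ := by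
  classical
  intro s α
  obtain ⟨ψ, hψ, hφψ⟩ := h (Finset.image (fun p : Γ × Γ => p.2⁻¹ * p.1) (s ×ˢ s))
  calc 0 ≤ _ := hψ s α
    _ = _ := Finset.sum_congr rfl fun x hx => Finset.sum_congr rfl fun y hy => by
      have hxy : y⁻¹ * x ∈ Finset.image (fun p : Γ × Γ => p.2⁻¹ * p.1) (s ×ˢ s) :=
        Finset.mem_image.mpr ⟨(x, y), Finset.mem_product.mpr ⟨hx, hy⟩, rfl⟩
      rw [hφψ hxy]

open Classical in
theorem isPosDef_ite_mem (H : Subgroup Γ) {q : ℝ}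
    (hq : (if H.index = 0 then (0 : ℝ) else -1 / ((H.index : ℝ) - 1)) ≤ q) (hq1 : q ≤ 1) :
    IsPosDef fun w => if w ∈ H then 1 else (q : ℂ) := by
  rw [isPosDef_iff_posSemidef_kernelMatrix]
  convert (Matrix.posSemidef_equicorrelation (n := Γ ⧸ H) hq hq1).submatrix
    (QuotientGroup.mk : Γ → Γ ⧸ H)
  ext y x
  simp [kernelMatrix, Matrix.equicorrelation, QuotientGroup.eq]

end PositiveDefinite

namespace CoxeterSystem

variable (cs : CoxeterSystem M W)

theorem colour_wordProd_subset (ω : List B) : colour cs (cs.wordProd ω) ⊆ {i | i ∈ ω} := by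
  intro i hi
  by_contra hiω
  refine hi ((parabolic cs _).list_prod_mem fun g hg => ?_)
  obtain ⟨j, hj, rfl⟩ := List.mem_map.mp hg
  exact Subgroup.subset_closure ⟨j, fun hji => hiω (hji ▸ hj), rfl⟩

theorem finite_colour (w : W) : (colour cs w).Finite := by
  obtain ⟨ω, rfl⟩ := cs.wordProd_surjective w
  exact ω.finite_toSet.subset (cs.colour_wordProd_subset ω)

open Classical in
theorem finprod_mem_colour {w : W} {F : Finset B} (hF : colour cs w ⊆ F) (q : B → ℝ) :
    ∏ᶠ i ∈ colour cs w, q i = ∏ i ∈ F, if w ∈ parabolic cs {j | j ≠ i} then 1 else q i := by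
  rw [finprod_mem_eq_prod_of_subset q (t := F.filter (· ∈ colour cs w)), Finset.prod_filter]
  · refine Finset.prod_congr rfl fun i _ => ?_
    by_cases h : w ∈ parabolic cs {j | j ≠ i} <;> simp [colour, h]
  · exact fun i hi => Finset.mem_filter.mpr ⟨hF hi.1, hi.1⟩
  · exact fun i hi => (Finset.mem_filter.mp hi).2

end CoxeterSystem

/-- If `-1/(d_s - 1) ≤ q_s ≤ 1` for every `s`, where `d_s = [W : W_{S∖{s}}]` (with the
convention that the lower bound is `0` when the index is infinite, i.e. `0` in Mathlib),
then the Riesz–Coxeter function `R_q(w) = ∏_{s ∈ S_w} q_s` is positive definite on `W`. -/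
theorem stmt_7 (cs : CoxeterSystem M W) (q : B → ℝ)
    (hq : ∀ i : B,
      (if (parabolic cs {j | j ≠ i}).index = 0 then (0 : ℝ)
        else -1 / (((parabolic cs {j | j ≠ i}).index : ℝ) - 1)) ≤ q i ∧ q i ≤ 1) :
    IsPosDef (fun w : W => ((∏ᶠ i ∈ colour cs w, q i : ℝ) : ℂ)) := by
  classical
  refine isPosDef_of_forall_finset_eqOn fun T => ?_
  let F := T.biUnion fun w => (cs.finite_colour w).toFinset
  refine ⟨∏ i ∈ F, fun w => if w ∈ parabolic cs {j | j ≠ i} then 1 else (q i : ℂ),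
    isPosDef_finset_prod F fun i _ => isPosDef_ite_mem _ (hq i).1 (hq i).2, fun w hw => ?_⟩
  have hF : colour cs w ⊆ F := fun i hi => Finset.mem_biUnion.mpr ⟨w, hw, by simpa⟩
  simp [cs.finprod_mem_colour hF, Finset.prod_apply, apply_ite]
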